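/- With M = X^T ∪ Y ∪ Z^T as constructed and m = 2 (so k ≥ 3), suppose 2 ≤ q^{k−3}. Let G be a k×n matrix over F_q whose columns consist of exactly one representative from each one-dimensional subspace of F_q^k spanned by an element of M, and let C be the [n,k] code over F_q generated by the rows of G. Then d(C⊥) = 3 and γ(C) = k − 1 = k − d(C⊥) + 2, so C attains equality in the bound γ(C) ≤ k − d(C⊥) + 2. -/

import Mathlib

/-- The Hamming weight of a vector. -/
def wt {F : Type*} [Field F] [DecidableEq F] {n : ℕ} (x : Fin n → F) : ℕ :=
  (Finset.univ.filter fun i => x i ≠ 0).card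

/-- A subcode `D` of `F^n` has full support: `Supp(D) = E = {1,…,n}`. -/
def HasFullSupport {F : Type*} [Field F] {n : ℕ} (D : Submodule F (Fin n → F)) : Prop :=
  ∀ i : Fin n, ∃ x ∈ D, x i ≠ 0

/-- The set of positive integers `r` such that `C` has an `r`-dimensional subcode of full
support; the covering dimension `γ(C)` is the least element of this set. -/
def gammaSet {F : Type*} [Field F] {n : ℕ} (C : Submodule F (Fin n → F)) : Set ℕ :=
  {r | 0 < r ∧ ∃ D : Submodule F (Fin n → F), D ≤ C ∧ Module.finrank F D = r ∧
    HasFullSupport D}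

/-- The set of Hamming weights of nonzero codewords of the dual code `C⊥`;
the minimum dual distance `d(C⊥)` is the least element of this set. -/
def dualWeights {F : Type*} [Field F] [DecidableEq F] {n : ℕ}
    (C : Submodule F (Fin n → F)) : Set ℕ :=
  {w | ∃ y : Fin n → F, y ≠ 0 ∧ (∀ x ∈ C, ∑ i, x i * y i = 0) ∧ wt y = w}

/-- The support of a vector `x ∈ F_q^k`, as a finite set of coordinates. -/
def suppF {F : Type*} [Field F] [DecidableEq F] {k : ℕ} (x : Fin k → F) : Finset (Fin k) :=
  Finset.univ.filter fun i => x i ≠ 0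

/-- `X^T`: the nonzero vectors whose support avoids `T`. -/
def XT {F : Type*} [Field F] [DecidableEq F] {k : ℕ} (T : Finset (Fin k)) :
    Set (Fin k → F) :=
  {x | x ≠ 0 ∧ ∀ t ∈ T, x t = 0}

/-- `Y_𝒱^T`: the nonzero vectors whose support meets `T` in exactly one coordinate,
with all nonzero scalar multiples of the vectors `v_i + λ•e_j` (for `j ∈ T` and
`λ ≠ 0`) removed. -/
def YT {F : Type*} [Field F] [DecidableEq F] {k : ℕ} {ι : Type*} (T : Finset (Fin k))
    (v : ι → Fin k → F) : Set (Fin k → F) :=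
  {x | x ≠ 0 ∧ (suppF x ∩ T).card = 1 ∧
    ¬∃ i : ι, ∃ j ∈ T, ∃ lam c : F, lam ≠ 0 ∧ c ≠ 0 ∧
      x = c • (v i + lam • (Pi.single j (1 : F) : Fin k → F))}

/-- `Z^T`: the nonzero vectors whose support is a 2-element subset of `T`. -/
def ZT {F : Type*} [Field F] [DecidableEq F] {k : ℕ} (T : Finset (Fin k)) :
    Set (Fin k → F) :=
  {x | x ≠ 0 ∧ suppF x ⊆ T ∧ (suppF x).card = 2}

/-- The point set `M = X^T ∪ Y_𝒱^T ∪ Z^T`. -/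
def blockM {F : Type*} [Field F] [DecidableEq F] {k : ℕ} {ι : Type*} (T : Finset (Fin k))
    (v : ι → Fin k → F) : Set (Fin k → F) :=
  XT T ∪ YT T v ∪ ZT T


set_option linter.unusedSectionVars false
set_option linter.unusedVariables false

section Aux

variable {F : Type*} [Field F] [DecidableEq F] {k : ℕ}

/-- Dot product with `w`, as a linear map in the other argument. -/
def dotL (w : Fin k → F) : (Fin k → F) →ₗ[F] F where
  toFun u := ∑ s, u s * w s
  map_add' u u' := by simp [add_mul, Finset.sum_add_distrib]
  map_smul' c u := by simp [Finset.mul_sum, mul_assoc]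

lemma dotL_apply (w u : Fin k → F) : dotL w u = ∑ s, u s * w s := rfl

lemma dotL_single (w : Fin k → F) (s0 : Fin k) : dotL w (Pi.single s0 1) = w s0 := by
  rw [dotL_apply]
  rw [Finset.sum_eq_single s0]
  · simp
  · intro b _ hb; simp [Pi.single_eq_of_ne hb]
  · simp

lemma mem_suppF {x : Fin k → F} {i : Fin k} : i ∈ suppF x ↔ x i ≠ 0 := by simp [suppF]

lemma suppF_smul {c : F} (hc : c ≠ 0) (x : Fin k → F) : suppF (c • x) = suppF x := by
  ext i; simp [suppF, hc]

lemma blockM_ne_zero {ι : Type*} {T : Finset (Fin k)} {v : ι → Fin k → F} {x : Fin k → F}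
    (h : x ∈ blockM T v) : x ≠ 0 := by
  rcases h with (h | h) | h <;> exact h.1

lemma blockM_smul {ι : Type*} {T : Finset (Fin k)} {v : ι → Fin k → F} {x : Fin k → F}
    {c : F} (hc : c ≠ 0) (h : x ∈ blockM T v) : c • x ∈ blockM T v := by
  rcases h with (⟨h0, hx⟩ | ⟨h0, h1, h2⟩) | ⟨h0, h1, h2⟩
  · exact Or.inl (Or.inl ⟨smul_ne_zero hc h0, fun t ht => by simp [hx t ht]⟩)
  · refine Or.inl (Or.inr ⟨smul_ne_zero hc h0, by rwa [suppF_smul hc], ?_⟩)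
    rintro ⟨i, j, hj, lam, c', hlam, hc', hx⟩
    refine h2 ⟨i, j, hj, lam, c⁻¹ * c', hlam, by simp [hc, hc'], ?_⟩
    rw [mul_smul, ← hx, inv_smul_smul₀ hc]
  · exact Or.inr ⟨smul_ne_zero hc h0, by rwa [suppF_smul hc], by rwa [suppF_smul hc]⟩

lemma single_mem_blockM {T : Finset (Fin k)} {v : Fin 1 → Fin k → F}
    (hv0 : v 0 ≠ 0) (hvT : ∀ t ∈ T, v 0 t = 0) (a : Fin k) :
    Pi.single a (1 : F) ∈ blockM T v := by
  have hne : (Pi.single a 1 : Fin k → F) ≠ 0 := by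
    intro h
    have := congr_fun h a
    simp at this
  by_cases ha : a ∈ T
  · refine Or.inl (Or.inr ⟨hne, ?_, ?_⟩)
    · have hsupp : suppF (Pi.single a (1 : F)) = {a} := by
        ext i
        simp only [mem_suppF, Finset.mem_singleton, Pi.single_apply]
        by_cases hia : i = a <;> simp [hia]
      rw [hsupp, Finset.singleton_inter_of_mem ha, Finset.card_singleton]
    · rintro ⟨i, j, hj, lam, c, hlam, hc, hx⟩
      obtain ⟨s, hs⟩ := Function.ne_iff.mp hv0
      simp only [Pi.zero_apply] at hs
      have hsT : s ∉ T := fun h => hs (hvT s h)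
      have hi : i = 0 := Subsingleton.elim _ _
      have := congr_fun hx s
      rw [hi] at this
      have hsa : s ≠ a := fun h => hsT (h ▸ ha)
      have hsj : s ≠ j := fun h => hsT (h ▸ hj)
      simp [Pi.single_eq_of_ne hsa, Pi.single_eq_of_ne hsj] at this
      rcases this with h | h
      exacts [hc h, hs h]
  · refine Or.inl (Or.inl ⟨hne, fun t ht => ?_⟩)
    have : t ≠ a := fun h => ha (h ▸ ht)
    exact Pi.single_eq_of_ne this 1

end Aux

section Geom

variable {F : Type*} [Field F] [DecidableEq F] {k : ℕ}

/-- Classification of non-members of `M` with `ρ(x) = (1,0)`. -/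
lemma notM_classify {T : Finset (Fin k)} {v : Fin 1 → Fin k → F}
    (hvT : ∀ t ∈ T, v 0 t = 0)
    {t1 t2 : Fin k} (hne : t1 ≠ t2) (hTeq : T = {t1, t2}) {x : Fin k → F}
    (hx1 : x t1 = 1) (hx2 : x t2 = 0) (hxM : x ∉ blockM T v) :
    ∃ c lam : F, c ≠ 0 ∧ lam ≠ 0 ∧ x = c • (v 0 + lam • (Pi.single t1 1 : Fin k → F)) := by
  have hx0 : x ≠ 0 := by
    intro h; rw [h] at hx1; simp at hx1
  have hYT : x ∉ YT T v := fun h => hxM (Or.inl (Or.inr h))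
  have hcard : (suppF x ∩ T).card = 1 := by
    have hset : suppF x ∩ T = {t1} := by
      ext i
      simp only [Finset.mem_inter, mem_suppF, hTeq, Finset.mem_insert, Finset.mem_singleton,
        Finset.mem_singleton]
      constructor
      · rintro ⟨hi, (rfl | rfl)⟩
        · rfl
        · exact absurd hx2 hi
      · rintro rfl
        exact ⟨by rw [hx1]; exact one_ne_zero, Or.inl rfl⟩
    rw [hset, Finset.card_singleton]
  obtain ⟨i, j, hj, lam, c, hlam, hc, hform⟩ := not_not.mp (fun h => hYT ⟨hx0, hcard, h⟩)
  have hi : i = 0 := Subsingleton.elim _ _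
  rw [hi] at hform
  have hjt1 : j = t1 := by
    rw [hTeq] at hj
    rcases Finset.mem_insert.mp hj with h | h
    · exact h
    · exfalso
      rw [Finset.mem_singleton] at h
      have hev := congr_fun hform t2
      rw [hx2, h] at hev
      simp [hvT t2 (by rw [hTeq]; simp)] at hev
      tauto
  subst hjt1
  exact ⟨c, lam, hc, hlam, hform⟩

/-- The removed point `w₀ = v 0 + e_{t1}` is not in `M`. -/
lemma w0_not_mem {T : Finset (Fin k)} {v : Fin 1 → Fin k → F}
    (hv0 : v 0 ≠ 0) (hvT : ∀ t ∈ T, v 0 t = 0)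
    {t1 : Fin k} (ht1 : t1 ∈ T) :
    (v 0 + (Pi.single t1 1 : Fin k → F)) ∉ blockM T v := by
  set w := v 0 + (Pi.single t1 1 : Fin k → F) with hw
  have hwt1 : w t1 = 1 := by simp [hw, hvT t1 ht1]
  rintro ((⟨h0, h⟩ | ⟨h0, h1, h2⟩) | ⟨h0, h1, h2⟩)
  · rw [h t1 ht1] at hwt1; simp at hwt1
  · exact h2 ⟨0, t1, ht1, 1, 1, one_ne_zero, one_ne_zero, by simp [hw]⟩
  · obtain ⟨s, hs⟩ := Function.ne_iff.mp hv0
    simp only [Pi.zero_apply] at hs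
    have hsT : s ∉ T := fun h => hs (hvT s h)
    have hst1 : s ≠ t1 := fun h => hsT (h ▸ ht1)
    have : w s ≠ 0 := by simp [hw, Pi.single_eq_of_ne hst1, hs]
    exact hsT (h1 (mem_suppF.mpr this))

/-- Every 2-dimensional subspace (given by an independent pair) meets `M`. -/
lemma span_meets_blockM {T : Finset (Fin k)} (hT : T.card = 2) {v : Fin 1 → Fin k → F}
    (hv0 : v 0 ≠ 0) (hvT : ∀ t ∈ T, v 0 t = 0)
    (x y : Fin k → F) (hx : x ≠ 0) (hxy : ∀ c : F, y ≠ c • x) :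
    ∃ z ∈ Submodule.span F {x, y}, z ≠ 0 ∧ z ∈ blockM T v := by
  obtain ⟨t1, t2, hne, hTeq⟩ := Finset.card_eq_two.mp hT
  have hxspan : x ∈ Submodule.span F {x, y} :=
    Submodule.subset_span (Set.mem_insert _ _)
  have hyspan : y ∈ Submodule.span F {x, y} :=
    Submodule.subset_span (Set.mem_insert_of_mem _ rfl)
  have hmemT : ∀ t ∈ T, t = t1 ∨ t = t2 := by
    intro t ht; rw [hTeq] at ht
    simpa using ht
  by_cases hd0 : x t1 * y t2 - x t2 * y t1 = 0
  · -- rank of projection to T-coordinates is ≤ 1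
    by_cases hx1 : x t1 = 0
    · by_cases hx2 : x t2 = 0
      · refine ⟨x, hxspan, hx, Or.inl (Or.inl ⟨hx, fun t ht => ?_⟩)⟩
        rcases hmemT t ht with rfl | rfl <;> assumption
      · -- x t2 ≠ 0
        refine ⟨y - (y t2 / x t2) • x, Submodule.sub_mem _ hyspan (Submodule.smul_mem _ _ hxspan),
          ?_, Or.inl (Or.inl ⟨?_, fun t ht => ?_⟩)⟩
        · intro h
          exact hxy (y t2 / x t2) (by rwa [sub_eq_zero] at h)
        · intro h
          exact hxy (y t2 / x t2) (by rwa [sub_eq_zero] at h)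
        · rcases hmemT t ht with h | h
          · have hyt1 : y t1 = 0 := by
              rw [hx1] at hd0
              simp only [zero_mul, zero_sub, neg_eq_zero, mul_eq_zero] at hd0
              tauto
            rw [h]
            simp [hx1, hyt1]
          · rw [h]
            simp only [Pi.sub_apply, Pi.smul_apply, smul_eq_mul]
            rw [div_mul_cancel₀ _ hx2, sub_self]
    · refine ⟨y - (y t1 / x t1) • x, Submodule.sub_mem _ hyspan (Submodule.smul_mem _ _ hxspan),
        ?_, Or.inl (Or.inl ⟨?_, fun t ht => ?_⟩)⟩
      · intro h
        exact hxy (y t1 / x t1) (by rwa [sub_eq_zero] at h)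
      · intro h
        exact hxy (y t1 / x t1) (by rwa [sub_eq_zero] at h)
      · rcases hmemT t ht with h | h
        · rw [h]
          simp only [Pi.sub_apply, Pi.smul_apply, smul_eq_mul]
          rw [div_mul_cancel₀ _ hx1, sub_self]
        · rw [h]
          simp only [Pi.sub_apply, Pi.smul_apply, smul_eq_mul]
          rw [div_mul_eq_mul_div, sub_eq_zero, eq_div_iff hx1]
          linear_combination hd0
  · -- determinant nonzero
    set d := x t1 * y t2 - x t2 * y t1 with hd
    set x' := d⁻¹ • (y t2 • x - x t2 • y) with hx'
    set y' := d⁻¹ • (x t1 • y - y t1 • x) with hy'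
    have hx'span : x' ∈ Submodule.span F {x, y} :=
      Submodule.smul_mem _ _ (Submodule.sub_mem _ (Submodule.smul_mem _ _ hxspan)
        (Submodule.smul_mem _ _ hyspan))
    have hy'span : y' ∈ Submodule.span F {x, y} :=
      Submodule.smul_mem _ _ (Submodule.sub_mem _ (Submodule.smul_mem _ _ hyspan)
        (Submodule.smul_mem _ _ hxspan))
    have hx'1 : x' t1 = 1 := by
      simp only [hx', Pi.smul_apply, Pi.sub_apply, smul_eq_mul]
      field_simp
      ring
    have hx'2 : x' t2 = 0 := by
      simp only [hx', Pi.smul_apply, Pi.sub_apply, smul_eq_mul]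
      ring
    have hy'1 : y' t1 = 0 := by
      simp only [hy', Pi.smul_apply, Pi.sub_apply, smul_eq_mul]
      ring
    have hy'2 : y' t2 = 1 := by
      simp only [hy', Pi.smul_apply, Pi.sub_apply, smul_eq_mul]
      field_simp
      ring
    have hx'0 : x' ≠ 0 := by
      intro h; rw [h] at hx'1; simp at hx'1
    have hy'0 : y' ≠ 0 := by
      intro h; rw [h] at hy'2; simp at hy'2
    by_cases hx'M : x' ∈ blockM T v
    · exact ⟨x', hx'span, hx'0, hx'M⟩
    by_cases hy'M : y' ∈ blockM T v
    · exact ⟨y', hy'span, hy'0, hy'M⟩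
    obtain ⟨c, lam, hc, hlam, hxf⟩ := notM_classify hvT hne hTeq hx'1 hx'2 hx'M
    have hTeq' : T = {t2, t1} := by rw [hTeq]; exact Finset.pair_comm t1 t2
    obtain ⟨c', lam', hc', hlam', hyf⟩ := notM_classify hvT hne.symm hTeq' hy'2 hy'1 hy'M
    set z := c' • x' - c • y' with hz
    have hzspan : z ∈ Submodule.span F {x, y} :=
      Submodule.sub_mem _ (Submodule.smul_mem _ _ hx'span) (Submodule.smul_mem _ _ hy'span)
    have hzt1 : z t1 = c' := by simp [hz, hx'1, hy'1]
    have hzt2 : z t2 = -c := by simp [hz, hx'2, hy'2]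
    have hzoff : ∀ a, a ∉ T → z a = 0 := by
      intro a ha
      have hat1 : a ≠ t1 := fun h => ha (by rw [hTeq]; simp [h])
      have hat2 : a ≠ t2 := fun h => ha (by rw [hTeq]; simp [h])
      have hxa : x' a = c * v 0 a := by
        rw [hxf]; simp [Pi.single_eq_of_ne hat1]
      have hya : y' a = c' * v 0 a := by
        rw [hyf]; simp [Pi.single_eq_of_ne hat2]
      simp [hz, hxa, hya]; ring
    have hsupp : suppF z = T := by
      ext i
      rw [mem_suppF]
      constructor
      · intro hi
        by_contra hiT
        exact hi (hzoff i hiT)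
      · intro hi
        rcases hmemT i hi with h | h
        · rw [h, hzt1]; exact hc'
        · rw [h, hzt2]; simpa using hc
    have hz0 : z ≠ 0 := by
      intro h
      have := congr_fun h t1
      rw [hzt1] at this
      exact hc' this
    exact ⟨z, hzspan, hz0, Or.inr ⟨hz0, by rw [hsupp], by rw [hsupp]; exact hT⟩⟩

end Geom

section Dual

variable {F : Type*} [Field F] [Fintype F] [DecidableEq F] {k n : ℕ}

lemma dual_part (hk : 3 ≤ k) (hq : 2 ≤ Fintype.card F ^ (k - 3))
    (T : Finset (Fin k)) (hT : T.card = 2)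
    (v : Fin 1 → Fin k → F) (hv0 : ∀ i, v i ≠ 0)
    (hvT : ∀ i, ∀ t ∈ T, v i t = 0)
    (G : Matrix (Fin k) (Fin n) F)
    (hGM : ∀ j : Fin n, (fun i => G i j) ∈ blockM T v)
    (hGrep : ∀ x ∈ blockM T v, ∃! j : Fin n, ∃ c : F, c ≠ 0 ∧ x = c • fun i => G i j)
    (C : Submodule F (Fin n → F)) (hC : C = Submodule.span F (Set.range G)) :
    IsLeast (dualWeights C) 3 := by
  have hrow : ∀ i0 : Fin k, G i0 ∈ C := by
    intro i0; rw [hC]; exact Submodule.subset_span (Set.mem_range_self i0)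
  constructor
  · -- 3 ∈ dualWeights
    have hk4 : 4 ≤ k := by
      by_contra h
      have hk3 : k = 3 := by omega
      subst hk3
      norm_num at hq
    obtain ⟨a, ha, b, hb, hab⟩ := Finset.one_lt_card.mp
      (show 1 < Tᶜ.card by rw [Finset.card_compl, hT]; simp; omega)
    rw [Finset.mem_compl] at ha hb
    set x1 : Fin k → F := Pi.single a 1 with hx1def
    set x2 : Fin k → F := Pi.single b 1 with hx2def
    set x3 : Fin k → F := x1 + x2 with hx3def
    have hx1a : x1 a = 1 := by simp [hx1def]
    have hx1b : x1 b = 0 := by simp [hx1def, Pi.single_eq_of_ne (Ne.symm hab)]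
    have hx2a : x2 a = 0 := by simp [hx2def, Pi.single_eq_of_ne hab]
    have hx2b : x2 b = 1 := by simp [hx2def]
    have hx3M : x3 ∈ blockM T v := by
      refine Or.inl (Or.inl ⟨?_, fun t ht => ?_⟩)
      · intro h
        have := congr_fun h a
        rw [hx3def] at this
        simp only [Pi.add_apply, Pi.zero_apply] at this
        rw [hx1a, hx2a] at this
        norm_num at this
      · have hta : t ≠ a := fun h => ha (h ▸ ht)
        have htb : t ≠ b := fun h => hb (h ▸ ht)
        simp [hx3def, hx1def, hx2def, Pi.single_eq_of_ne hta, Pi.single_eq_of_ne htb]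
    have hx1M : x1 ∈ blockM T v := single_mem_blockM (hv0 0) (hvT 0) a
    have hx2M : x2 ∈ blockM T v := single_mem_blockM (hv0 0) (hvT 0) b
    obtain ⟨j1, ⟨c1, hc1, he1⟩, -⟩ := hGrep x1 hx1M
    obtain ⟨j2, ⟨c2, hc2, he2⟩, -⟩ := hGrep x2 hx2M
    obtain ⟨j3, ⟨c3, hc3, he3⟩, -⟩ := hGrep x3 hx3M
    have hGb1 : G b j1 = 0 := by
      have := congr_fun he1 b
      rw [hx1b] at this
      simp only [Pi.smul_apply, smul_eq_mul] at this
      exact ((mul_eq_zero.mp this.symm).resolve_left hc1)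
    have hGa2 : G a j2 = 0 := by
      have := congr_fun he2 a
      rw [hx2a] at this
      simp only [Pi.smul_apply, smul_eq_mul] at this
      exact ((mul_eq_zero.mp this.symm).resolve_left hc2)
    have h12 : j1 ≠ j2 := by
      intro h
      have heq := congr_fun he2 b
      rw [hx2b, ← h] at heq
      simp only [Pi.smul_apply, smul_eq_mul] at heq
      rw [hGb1, mul_zero] at heq
      exact one_ne_zero heq
    have h13 : j1 ≠ j3 := by
      intro h
      have heq := congr_fun he3 b
      have hx3b : x3 b = 1 := by rw [hx3def]; simp only [Pi.add_apply]; rw [hx1b, hx2b, zero_add]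
      rw [hx3b, ← h] at heq
      simp only [Pi.smul_apply, smul_eq_mul] at heq
      rw [hGb1, mul_zero] at heq
      exact one_ne_zero heq
    have h23 : j2 ≠ j3 := by
      intro h
      have heq := congr_fun he3 a
      have hx3a : x3 a = 1 := by rw [hx3def]; simp only [Pi.add_apply]; rw [hx1a, hx2a, add_zero]
      rw [hx3a, ← h] at heq
      simp only [Pi.smul_apply, smul_eq_mul] at heq
      rw [hGa2, mul_zero] at heq
      exact one_ne_zero heq
    set y : Fin n → F := fun j => if j = j1 then c1 else if j = j2 then c2 else
      if j = j3 then -c3 else 0 with hy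
    have hyj1 : y j1 = c1 := by simp [hy]
    have hyj2 : y j2 = c2 := by simp [hy, Ne.symm h12]
    have hyj3 : y j3 = -c3 := by simp [hy, Ne.symm h13, Ne.symm h23]
    have hy0 : ∀ j, j ≠ j1 → j ≠ j2 → j ≠ j3 → y j = 0 := by
      intro j hj1' hj2' hj3'; simp [hy, hj1', hj2', hj3']
    refine ⟨y, ?_, ?_, ?_⟩
    · intro h
      have := congr_fun h j1
      rw [hyj1] at this
      exact hc1 this
    · have hker : C ≤ LinearMap.ker (dotL y) := by
        rw [hC, Submodule.span_le]
        rintro - ⟨i0, rfl⟩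
        rw [SetLike.mem_coe, LinearMap.mem_ker, dotL_apply]
        have hsum : ∑ s, G i0 s * y s = ∑ s ∈ ({j1, j2, j3} : Finset (Fin n)), G i0 s * y s := by
          refine (Finset.sum_subset (Finset.subset_univ _) ?_).symm
          intro s _ hs
          simp only [Finset.mem_insert, Finset.mem_singleton] at hs
          push_neg at hs
          rw [hy0 s hs.1 hs.2.1 hs.2.2, mul_zero]
        rw [hsum, Finset.sum_insert (by simp [h12, h13]),
          Finset.sum_insert (by simp [h23]), Finset.sum_singleton, hyj1, hyj2, hyj3]
        have e1 := congr_fun he1 i0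
        have e2 := congr_fun he2 i0
        have e3 := congr_fun he3 i0
        simp only [Pi.smul_apply, smul_eq_mul] at e1 e2 e3
        have hsplit : x3 i0 = x1 i0 + x2 i0 := rfl
        linear_combination -e1 - e2 + e3 - hsplit
      intro x hx
      have := hker hx
      rwa [LinearMap.mem_ker, dotL_apply] at this
    · have hfil : (Finset.univ.filter fun j => y j ≠ 0) = {j1, j2, j3} := by
        ext j
        simp only [Finset.mem_filter, Finset.mem_univ, true_and, Finset.mem_insert,
          Finset.mem_singleton]
        constructor
        · intro hj
          by_contra hcon
          push_neg at hcon
          exact hj (hy0 j hcon.1 hcon.2.1 hcon.2.2)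
        · rintro (rfl | rfl | rfl)
          · rw [hyj1]; exact hc1
          · rw [hyj2]; exact hc2
          · rw [hyj3]; simpa using hc3
      rw [wt, hfil]
      exact Finset.card_eq_three.mpr ⟨j1, j2, j3, h12, h13, h23, rfl⟩
  · -- lower bound
    intro w hw
    obtain ⟨y, hy0, horth, hwt⟩ := hw
    by_contra hcon
    push_neg at hcon
    have hGy : ∀ i0 : Fin k, ∑ j, G i0 j * y j = 0 := fun i0 => horth (G i0) (hrow i0)
    set s := Finset.univ.filter (fun j => y j ≠ 0) with hs
    have hscard : s.card = w := hwt
    have hsum : ∀ i0 : Fin k, ∑ j ∈ s, G i0 j * y j = 0 := by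
      intro i0
      rw [← hGy i0]
      refine Finset.sum_subset (Finset.subset_univ _) ?_
      intro j _ hj
      have hyj : y j = 0 := by
        by_contra h
        exact hj (by simp [hs, h])
      rw [hyj, mul_zero]
    have hw3 : w < 3 := hcon
    interval_cases w
    · have hse : s = ∅ := Finset.card_eq_zero.mp hscard
      apply hy0
      funext j
      simp only [Pi.zero_apply]
      by_contra hj
      have hjs : j ∈ s := by simp [hs, hj]
      rw [hse] at hjs
      simp at hjs
    · obtain ⟨j0, hj0⟩ := Finset.card_eq_one.mp hscard
      have hyj0 : y j0 ≠ 0 := by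
        have : j0 ∈ s := by rw [hj0]; simp
        simpa [hs] using this
      have hcol : (fun i => G i j0) = (0 : Fin k → F) := by
        funext i0
        have := hsum i0
        rw [hj0, Finset.sum_singleton] at this
        exact (mul_eq_zero.mp this).resolve_right hyj0
      exact blockM_ne_zero (hGM j0) hcol
    · obtain ⟨j0, j1, hj01, hj⟩ := Finset.card_eq_two.mp hscard
      have hyj0 : y j0 ≠ 0 := by
        have : j0 ∈ s := by rw [hj]; simp
        simpa [hs] using this
      have hceq : (fun i => G i j0) = (-(y j1) * (y j0)⁻¹) • fun i => G i j1 := by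
        funext i0
        have heq := hsum i0
        rw [hj, Finset.sum_pair hj01] at heq
        simp only [Pi.smul_apply, smul_eq_mul]
        field_simp
        linear_combination heq
      have hcne : -(y j1) * (y j0)⁻¹ ≠ 0 := by
        intro h
        rw [h, zero_smul] at hceq
        exact blockM_ne_zero (hGM j0) hceq
      obtain ⟨jq, -, hjqu⟩ := hGrep (fun i => G i j0) (hGM j0)
      have e0 : j0 = jq := hjqu j0 ⟨1, one_ne_zero, (one_smul F _).symm⟩
      have e1 : j1 = jq := hjqu j1 ⟨_, hcne, hceq⟩
      exact hj01 (e0.trans e1.symm)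

end Dual

section Gamma

variable {F : Type*} [Field F] [Fintype F] [DecidableEq F] {k n : ℕ}

lemma gamma_part (hk : 3 ≤ k) (hq : 2 ≤ Fintype.card F ^ (k - 3))
    (T : Finset (Fin k)) (hT : T.card = 2)
    (v : Fin 1 → Fin k → F) (hv0 : ∀ i, v i ≠ 0)
    (hvT : ∀ i, ∀ t ∈ T, v i t = 0)
    (G : Matrix (Fin k) (Fin n) F)
    (hGM : ∀ j : Fin n, (fun i => G i j) ∈ blockM T v)
    (hGrep : ∀ x ∈ blockM T v, ∃! j : Fin n, ∃ c : F, c ≠ 0 ∧ x = c • fun i => G i j)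
    (C : Submodule F (Fin n → F)) (hC : C = Submodule.span F (Set.range G)) :
    IsLeast (gammaSet C) (k - 1) := by
  obtain ⟨t1, t2, ht12, hTeq⟩ := Finset.card_eq_two.mp hT
  have ht1T : t1 ∈ T := by rw [hTeq]; simp
  have hvT0 := hvT 0
  have hfin : Module.finrank F (Fin k → F) = k := by
    rw [Module.finrank_pi]; simp
  set φ := G.vecMulLinear with hφ
  have hφr : LinearMap.range φ = C := by
    rw [hC, hφ, range_vecMulLinear]; rfl
  have hφapp : ∀ (u : Fin k → F) (j : Fin n), φ u j = ∑ i, u i * G i j := by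
    intro u j
    simp [hφ, Matrix.vecMulLinear_apply, Matrix.vecMul, dotProduct]
  have hsingle : ∀ a : Fin k, Pi.single a (1 : F) ∈ blockM T v :=
    single_mem_blockM (hv0 0) hvT0
  have hφinj : Function.Injective φ := by
    rw [← LinearMap.ker_eq_bot, Submodule.eq_bot_iff]
    intro u hu
    rw [LinearMap.mem_ker] at hu
    funext a
    obtain ⟨j, ⟨c, hc, hrep⟩, -⟩ := hGrep _ (hsingle a)
    have h1 : dotL (Pi.single a (1 : F)) u = u a := by
      rw [dotL_apply, Finset.sum_eq_single a]
      · simp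
      · intro s _ hs; simp [Pi.single_eq_of_ne hs]
      · simp
    have h2 : dotL (Pi.single a (1 : F)) u = c * φ u j := by
      rw [dotL_apply, hφapp, Finset.mul_sum]
      refine Finset.sum_congr rfl fun s _ => ?_
      have := congr_fun hrep s
      simp only [Pi.smul_apply, smul_eq_mul] at this
      rw [this]; ring
    rw [h1, hu] at h2
    simpa using h2
  set w0 : Fin k → F := v 0 + Pi.single t1 1 with hw0
  have hw0M : w0 ∉ blockM T v := w0_not_mem (hv0 0) hvT0 ht1T
  have hw0t1 : w0 t1 = 1 := by simp [hw0, hvT0 t1 ht1T]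
  constructor
  · -- k - 1 ∈ gammaSet
    set U0 := LinearMap.ker (dotL w0) with hU0
    have hU0rank : Module.finrank F U0 = k - 1 := by
      have hrn := LinearMap.finrank_range_add_finrank_ker (dotL w0)
      have hrange : LinearMap.range (dotL w0) = ⊤ := by
        rw [eq_top_iff]
        rintro c -
        exact ⟨c • (Pi.single t1 1 : Fin k → F), by rw [map_smul, dotL_single, hw0t1]; simp⟩
      rw [hrange, hfin, ← hU0] at hrn
      have htop : Module.finrank F (⊤ : Submodule F F) = 1 := by
        rw [finrank_top, Module.finrank_self]
      rw [htop] at hrn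
      omega
    set D0 := Submodule.map φ U0 with hD0
    have hD0C : D0 ≤ C := by
      rintro x ⟨u, hu, rfl⟩
      rw [← hφr]
      exact LinearMap.mem_range_self φ u
    have hD0rank : Module.finrank F D0 = k - 1 := by
      rw [← hU0rank]
      exact ((Submodule.equivMapOfInjective φ hφinj U0).finrank_eq).symm
    refine ⟨by omega, D0, hD0C, hD0rank, ?_⟩
    intro j
    by_contra hfull
    push_neg at hfull
    have hUj : ∀ u ∈ U0, dotL (fun i => G i j) u = 0 := by
      intro u hu
      have : φ u j = 0 := hfull (φ u) (Submodule.mem_map_of_mem hu)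
      rw [← this, hφapp, dotL_apply]
    set c := G t1 j with hcdef
    have hcol : (fun i => G i j) = c • w0 := by
      funext s
      have hmem : ((Pi.single s 1 : Fin k → F) - w0 s • (Pi.single t1 1 : Fin k → F)) ∈ U0 := by
        rw [hU0, LinearMap.mem_ker, map_sub, map_smul, dotL_single, dotL_single, hw0t1]
        simp
      have heq := hUj _ hmem
      rw [map_sub, map_smul, dotL_single, dotL_single] at heq
      simp only [smul_eq_mul, Pi.smul_apply] at heq ⊢
      linear_combination heq
    have hc0 : c ≠ 0 := by
      intro h
      rw [h, zero_smul] at hcol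
      exact blockM_ne_zero (hGM j) hcol
    apply hw0M
    have hrw : w0 = c⁻¹ • (fun i => G i j) := by rw [hcol, inv_smul_smul₀ hc0]
    rw [hrw]
    exact blockM_smul (inv_ne_zero hc0) (hGM j)
  · -- lower bound
    rintro r ⟨hrpos, D, hDC, hDrank, hDfull⟩
    by_contra hcon
    push_neg at hcon
    set U := Submodule.comap φ D with hU
    have hDr : D ≤ LinearMap.range φ := le_of_le_of_eq hDC hφr.symm
    have hmapU : Submodule.map φ U = D := Submodule.map_comap_eq_self hDr
    have hUrank : Module.finrank F U = r := by
      rw [← hDrank, ← hmapU]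
      exact (Submodule.equivMapOfInjective φ hφinj U).finrank_eq
    set r' := Module.finrank F U with hr'
    set b := Module.finBasis F U with hb
    set A : Matrix (Fin r') (Fin k) F := fun i s => (b i : Fin k → F) s with hA
    set L := A.mulVecLin with hL
    have hLapp : ∀ (z : Fin k → F) (i : Fin r'), L z i = dotL z (b i : Fin k → F) := by
      intro z i
      rw [hL, Matrix.mulVecLin_apply]
      simp [Matrix.mulVec, dotProduct, dotL_apply, hA, mul_comm]
    set W := LinearMap.ker L with hW
    have hWdim : 2 ≤ Module.finrank F W := by
      have hrn := LinearMap.finrank_range_add_finrank_ker L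
      have h1 : Module.finrank F (LinearMap.range L) ≤ r := by
        calc Module.finrank F (LinearMap.range L) ≤ Module.finrank F (Fin r' → F) :=
              Submodule.finrank_le _
          _ = r' := by rw [Module.finrank_pi]; simp
          _ = r := hUrank
      rw [hfin, ← hW] at hrn
      omega
    have hWnotM : ∀ z ∈ W, z ∈ blockM T v → False := by
      intro z hzW hzM
      obtain ⟨j, ⟨c, hc, hrep⟩, -⟩ := hGrep z hzM
      obtain ⟨x, hxD, hxj⟩ := hDfull j
      rw [← hmapU] at hxD
      obtain ⟨u, huU, rfl⟩ := hxD
      have hbi : ∀ i : Fin r', dotL z (b i : Fin k → F) = 0 := by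
        intro i
        rw [← hLapp z i]
        rw [hW, LinearMap.mem_ker] at hzW
        rw [hzW]
        simp
      have hdz : dotL z u = 0 := by
        set u' : U := ⟨u, huU⟩ with hu'
        have hrepr := b.sum_repr u'
        have hcoe : (∑ i, b.repr u' i • (b i : Fin k → F)) = u := by
          have hcast := congrArg (Submodule.subtype U) hrepr
          rw [map_sum] at hcast
          simp only [map_smul, Submodule.subtype_apply] at hcast
          exact hcast
        rw [← hcoe, map_sum]
        refine Finset.sum_eq_zero fun i _ => ?_
        rw [map_smul, hbi i]
        simp
      have hdz2 : dotL z u = c * φ u j := by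
        rw [dotL_apply, hφapp, Finset.mul_sum]
        refine Finset.sum_congr rfl fun s _ => ?_
        have := congr_fun hrep s
        simp only [Pi.smul_apply, smul_eq_mul] at this
        rw [this]; ring
      rw [hdz] at hdz2
      exact hxj ((mul_eq_zero.mp hdz2.symm).resolve_left hc)
    have hWbot : W ≠ ⊥ := by
      intro h
      rw [h, finrank_bot] at hWdim
      omega
    obtain ⟨x, hxW, hx0⟩ := (Submodule.ne_bot_iff W).mp hWbot
    have hexy : ∃ y ∈ W, ∀ c : F, y ≠ c • x := by
      by_contra h
      push_neg at h
      have hle : W ≤ Submodule.span F {x} := by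
        intro y hy
        obtain ⟨c, rfl⟩ := h y hy
        exact Submodule.smul_mem _ c (Submodule.mem_span_singleton_self x)
      have hmono := Submodule.finrank_mono hle
      rw [finrank_span_singleton hx0] at hmono
      omega
    obtain ⟨y, hyW, hxy⟩ := hexy
    obtain ⟨z, hzspan, hz0, hzM⟩ := span_meets_blockM hT (hv0 0) hvT0 x y hx0 hxy
    have hzW : z ∈ W := by
      have hle : Submodule.span F {x, y} ≤ W := by
        rw [Submodule.span_le]
        intro w hw
        rcases hw with rfl | hw
        · exact hxW
        · rw [Set.mem_singleton_iff] at hw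
          subst hw
          exact hyW
      exact hle hzspan
    exact hWnotM z hzW hzM

end Gamma

/-- with `M = X^T ∪ Y ∪ Z^T` constructed for `m = 2` (so `k ≥ 3`) and
`2 ≤ q^(k-3)`, let `G` be a `k×n` matrix whose columns give exactly one representative of
each one-dimensional subspace spanned by an element of `M`, and let `C` be the `[n,k]`
code generated by the rows of `G`. Then `d(C⊥) = 3` and
`γ(C) = k - 1 = k - d(C⊥) + 2`, so `C` attains the bound `γ(C) ≤ k - d(C⊥) + 2`. -/
theorem stmt19 {F : Type*} [Field F] [Fintype F] [DecidableEq F] {k n : ℕ}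
    (hk : 3 ≤ k) (hq : 2 ≤ Fintype.card F ^ (k - 3))
    (T : Finset (Fin k)) (hT : T.card = 2)
    (v : Fin 1 → Fin k → F) (hv0 : ∀ i, v i ≠ 0)
    (hvT : ∀ i, ∀ t ∈ T, v i t = 0)
    (G : Matrix (Fin k) (Fin n) F)
    (hGM : ∀ j : Fin n, (fun i => G i j) ∈ blockM T v)
    (hGrep : ∀ x ∈ blockM T v, ∃! j : Fin n, ∃ c : F, c ≠ 0 ∧ x = c • fun i => G i j)
    (C : Submodule F (Fin n → F)) (hC : C = Submodule.span F (Set.range G)) :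
    IsLeast (dualWeights C) 3 ∧ IsLeast (gammaSet C) (k - 1) :=
  ⟨dual_part hk hq T hT v hv0 hvT G hGM hGrep C hC,
   gamma_part hk hq T hT v hv0 hvT G hGM hGrep C hC⟩
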